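/- Inverse transformation of the scaled system back to the original system: let ρ, D, f, c > 0 be constants and let p̃, ṽ : [0, L] × [0, r] → ℝ be functions such that for each k = 1, …, r and all l ∈ [0, L], s ∈ (k−1, k): ∂ṽ/∂s + θᵏ (1/ρ) ∂p̃/∂l + θᵏ f ṽ|ṽ|/(2D) = 0 and ∂p̃/∂s + θᵏ ρ c² ∂ṽ/∂l = 0, with p̃, ṽ of class C¹. Define p(l, t) = p̃(l, ψ⁻¹(t)) and v(l, t) = ṽ(l, ψ⁻¹(t)). Then for each k and all l ∈ [0, L], t ∈ (t_{k−1}, t_k): ∂v/∂t + (1/ρ) ∂p/∂l + f v|v|/(2D) = 0 and ∂p/∂t + ρ c² ∂v/∂l = 0. -/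

import Mathlib

/-! On the `k`-th switching interval `(t_{k-1}, t_k)` the scaling `ψ` is affine with slope `θᵏ`,
so its inverse is affine with slope `1/θᵏ` there. By the chain rule the `t`-derivatives of
`p = p̃ ∘ ψ⁻¹` and `v = ṽ ∘ ψ⁻¹` are the `s`-derivatives of `p̃`, `ṽ` divided by `θᵏ`, and dividing
the scaled equations by `θᵏ` gives the original ones. -/

open Set Filter Topology Finset

def switchTime (θ : ℕ → ℝ) (k : ℕ) : ℝ := ∑ i ∈ range k, θ (i + 1)

lemma switchTime_succ (θ : ℕ → ℝ) (j : ℕ) :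
    switchTime θ (j + 1) = switchTime θ j + θ (j + 1) :=
  sum_range_succ _ _

lemma add_div_sub_mem_Ioo {a b θ τ : ℝ} (hθ : 0 < θ) (hτ : τ ∈ Ioo b (b + θ)) :
    a + (τ - b) / θ ∈ Ioo a (a + 1) := by
  have hpos : 0 < (τ - b) / θ := div_pos (by linarith [hτ.1]) hθ
  have hlt : (τ - b) / θ < 1 := (div_lt_one hθ).mpr (by linarith [hτ.2])
  constructor <;> linarith

lemma hasDerivAt_of_eventuallyEq_add_div_sub {φ : ℝ → ℝ} {a b θ t : ℝ}
    (hφ : φ =ᶠ[𝓝 t] fun τ => a + (τ - b) / θ) : HasDerivAt φ θ⁻¹ t := by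
  have h : HasDerivAt (fun τ => a + (τ - b) / θ) (1 / θ) t :=
    (((hasDerivAt_id t).sub_const b).div_const θ).const_add a
  simpa using h.congr_of_eventuallyEq hφ

lemma mul_inv_eq_neg_of_add_mul_eq_zero {K : Type*} [Field K] {a b θ : K} (hθ : θ ≠ 0)
    (h : a + θ * b = 0) : a * θ⁻¹ = -b := by
  field_simp
  linear_combination h

section TimeScaling

variable {r : ℕ} {θ : ℕ → ℝ} {ψ φ : ℝ → ℝ}
  (hψ : ∀ s : ℝ, 0 ≤ s → s < r →
    ψ s = (∑ i ∈ range ⌊s⌋₊, θ (i + 1)) + θ (⌊s⌋₊ + 1) * (s - ⌊s⌋₊))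
include hψ

lemma timeScaling_eq_of_mem_Ico {j : ℕ} (hj : j + 1 ≤ r) {s : ℝ} (hs : s ∈ Ico (j : ℝ) (j + 1)) :
    ψ s = switchTime θ j + θ (j + 1) * (s - j) := by
  have hsr : s < r := hs.2.trans_le (by exact_mod_cast hj)
  rw [hψ s ((Nat.cast_nonneg j).trans hs.1) hsr, Nat.floor_eq_on_Ico j s hs]
  rfl

lemma inverse_eq_of_mem_Ioo (hφψ : ∀ s ∈ Icc (0 : ℝ) r, φ (ψ s) = s) {j : ℕ} (hj : j + 1 ≤ r)
    (hθ : 0 < θ (j + 1)) {τ : ℝ} (hτ : τ ∈ Ioo (switchTime θ j) (switchTime θ (j + 1))) :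
    φ τ = j + (τ - switchTime θ j) / θ (j + 1) := by
  rw [switchTime_succ] at hτ
  set s := (j : ℝ) + (τ - switchTime θ j) / θ (j + 1) with hs_def
  have hs : s ∈ Ioo (j : ℝ) (j + 1) := add_div_sub_mem_Ioo hθ hτ
  have hψs : ψ s = τ := by
    rw [timeScaling_eq_of_mem_Ico hψ hj (Ioo_subset_Ico_self hs), hs_def]
    field_simp
    ring
  have hsr : s ≤ r := hs.2.le.trans (by exact_mod_cast hj)
  rw [← hψs, hφψ s ⟨(Nat.cast_nonneg j).trans hs.1.le, hsr⟩]

lemma hasDerivAt_inverse_of_mem_Ioo (hφψ : ∀ s ∈ Icc (0 : ℝ) r, φ (ψ s) = s) {j : ℕ}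
    (hj : j + 1 ≤ r) (hθ : 0 < θ (j + 1)) {t : ℝ}
    (ht : t ∈ Ioo (switchTime θ j) (switchTime θ (j + 1))) :
    HasDerivAt φ (θ (j + 1))⁻¹ t ∧ φ t ∈ Ioo (j : ℝ) (j + 1) := by
  refine ⟨hasDerivAt_of_eventuallyEq_add_div_sub (a := j) (b := switchTime θ j) ?_, ?_⟩
  · filter_upwards [Ioo_mem_nhds ht.1 ht.2] with τ hτ
    exact inverse_eq_of_mem_Ioo hψ hφψ hj hθ hτ
  · rw [inverse_eq_of_mem_Ioo hψ hφψ hj hθ ht]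
    exact add_div_sub_mem_Ioo hθ (switchTime_succ θ j ▸ ht)

end TimeScaling

theorem stmt_18_general (r : ℕ) (L : ℝ)
    (ρ D f c : ℝ)
    (θ : ℕ → ℝ) (hθpos : ∀ k, 1 ≤ k → k ≤ r → 0 < θ k)
    (ψ : ℝ → ℝ)
    (hψ : ∀ s : ℝ, 0 ≤ s → s < r →
      ψ s = (∑ i ∈ Finset.range ⌊s⌋₊, θ (i + 1)) + θ (⌊s⌋₊ + 1) * (s - ⌊s⌋₊))
    (φ : ℝ → ℝ)  -- the inverse bijection ψ⁻¹ : [0, T] → [0, r]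
    (hφψ : ∀ s ∈ Set.Icc (0 : ℝ) (r : ℝ), φ (ψ s) = s)
    (pt vt ps vs pl vl : ℝ → ℝ → ℝ)
    -- p̃, ṽ are C¹: ps, vs are the derivatives in s, pl, vl the derivatives in l
    (hvs : ∀ l ∈ Set.Icc (0 : ℝ) L, ∀ s ∈ Set.Icc (0 : ℝ) (r : ℝ),
      HasDerivAt (fun σ => vt l σ) (vs l s) s)
    (hps : ∀ l ∈ Set.Icc (0 : ℝ) L, ∀ s ∈ Set.Icc (0 : ℝ) (r : ℝ),
      HasDerivAt (fun σ => pt l σ) (ps l s) s)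
    -- the time-scaled Saint-Venant equations
    (hpde₁ : ∀ k : ℕ, 1 ≤ k → k ≤ r → ∀ l ∈ Set.Icc (0 : ℝ) L,
      ∀ s ∈ Set.Ioo ((k : ℝ) - 1) (k : ℝ),
        vs l s + θ k * (1 / ρ) * pl l s + θ k * (f * vt l s * |vt l s| / (2 * D)) = 0)
    (hpde₂ : ∀ k : ℕ, 1 ≤ k → k ≤ r → ∀ l ∈ Set.Icc (0 : ℝ) L,
      ∀ s ∈ Set.Ioo ((k : ℝ) - 1) (k : ℝ),
        ps l s + θ k * (ρ * c ^ 2 * vl l s) = 0) :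
    ∀ k : ℕ, 1 ≤ k → k ≤ r → ∀ l ∈ Set.Icc (0 : ℝ) L,
      ∀ t ∈ Set.Ioo (∑ i ∈ Finset.range (k - 1), θ (i + 1))
          (∑ i ∈ Finset.range k, θ (i + 1)),
        HasDerivAt (fun τ => vt l (φ τ))
          (-((1 / ρ) * pl l (φ t) + f * vt l (φ t) * |vt l (φ t)| / (2 * D))) t ∧
        HasDerivAt (fun τ => pt l (φ τ))
          (-(ρ * c ^ 2 * vl l (φ t))) t := by
  rintro k hk hkr l hl t ht
  obtain ⟨j, rfl⟩ := Nat.exists_eq_add_of_le' hk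
  have hθ : θ (j + 1) ≠ 0 := (hθpos _ hk hkr).ne'
  obtain ⟨hφ, hφt⟩ := hasDerivAt_inverse_of_mem_Ioo hψ hφψ hkr (hθpos _ hk hkr) ht
  have hφt' : φ t ∈ Ioo ((↑(j + 1) : ℝ) - 1) ↑(j + 1) := by push_cast; simpa using hφt
  have hφt_Icc : φ t ∈ Icc (0 : ℝ) r :=
    ⟨(Nat.cast_nonneg j).trans hφt.1.le, hφt.2.le.trans (by exact_mod_cast hkr)⟩
  have e₁ := hpde₁ _ hk hkr l hl _ hφt'
  have e₂ := hpde₂ _ hk hkr l hl _ hφt'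
  exact ⟨((hvs l hl _ hφt_Icc).comp t hφ).congr_deriv
      (mul_inv_eq_neg_of_add_mul_eq_zero hθ (by linear_combination e₁)),
    ((hps l hl _ hφt_Icc).comp t hφ).congr_deriv (mul_inv_eq_neg_of_add_mul_eq_zero hθ e₂)⟩

/-- Inverse transformation of the scaled system back to the original system:
if p̃, ṽ satisfy the time-scaled Saint-Venant equations on each (k−1, k), then
p(l,t) = p̃(l,ψ⁻¹(t)), v(l,t) = ṽ(l,ψ⁻¹(t)) satisfy the original Saint-Venant
equations on each (t_{k−1}, t_k). -/
theorem stmt_18 (r : ℕ) (hr : 0 < r) (T L : ℝ) (hT : 0 < T) (hL : 0 < L)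
    (ρ D f c : ℝ) (hρ : 0 < ρ) (hD : 0 < D) (hf : 0 < f) (hc : 0 < c)
    (θ : ℕ → ℝ) (hθpos : ∀ k, 1 ≤ k → k ≤ r → 0 < θ k)
    (hθsum : ∑ i ∈ Finset.range r, θ (i + 1) = T)
    (ψ : ℝ → ℝ)
    (hψ : ∀ s : ℝ, 0 ≤ s → s < r →
      ψ s = (∑ i ∈ Finset.range ⌊s⌋₊, θ (i + 1)) + θ (⌊s⌋₊ + 1) * (s - ⌊s⌋₊))
    (hψr : ψ r = T)
    (φ : ℝ → ℝ)  -- the inverse bijection ψ⁻¹ : [0, T] → [0, r]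
    (hφψ : ∀ s ∈ Set.Icc (0 : ℝ) (r : ℝ), φ (ψ s) = s)
    (hψφ : ∀ x ∈ Set.Icc (0 : ℝ) T, ψ (φ x) = x)
    (pt vt ps vs pl vl : ℝ → ℝ → ℝ)
    -- p̃, ṽ are C¹: ps, vs are the derivatives in s, pl, vl the derivatives in l
    (hvs : ∀ l ∈ Set.Icc (0 : ℝ) L, ∀ s ∈ Set.Icc (0 : ℝ) (r : ℝ),
      HasDerivAt (fun σ => vt l σ) (vs l s) s)
    (hps : ∀ l ∈ Set.Icc (0 : ℝ) L, ∀ s ∈ Set.Icc (0 : ℝ) (r : ℝ),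
      HasDerivAt (fun σ => pt l σ) (ps l s) s)
    (hpl : ∀ l ∈ Set.Icc (0 : ℝ) L, ∀ s ∈ Set.Icc (0 : ℝ) (r : ℝ),
      HasDerivAt (fun x => pt x s) (pl l s) l)
    (hvl : ∀ l ∈ Set.Icc (0 : ℝ) L, ∀ s ∈ Set.Icc (0 : ℝ) (r : ℝ),
      HasDerivAt (fun x => vt x s) (vl l s) l)
    -- the time-scaled Saint-Venant equations
    (hpde₁ : ∀ k : ℕ, 1 ≤ k → k ≤ r → ∀ l ∈ Set.Icc (0 : ℝ) L,
      ∀ s ∈ Set.Ioo ((k : ℝ) - 1) (k : ℝ),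
        vs l s + θ k * (1 / ρ) * pl l s + θ k * (f * vt l s * |vt l s| / (2 * D)) = 0)
    (hpde₂ : ∀ k : ℕ, 1 ≤ k → k ≤ r → ∀ l ∈ Set.Icc (0 : ℝ) L,
      ∀ s ∈ Set.Ioo ((k : ℝ) - 1) (k : ℝ),
        ps l s + θ k * (ρ * c ^ 2 * vl l s) = 0) :
    ∀ k : ℕ, 1 ≤ k → k ≤ r → ∀ l ∈ Set.Icc (0 : ℝ) L,
      ∀ t ∈ Set.Ioo (∑ i ∈ Finset.range (k - 1), θ (i + 1))
          (∑ i ∈ Finset.range k, θ (i + 1)),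
        HasDerivAt (fun τ => vt l (φ τ))
          (-((1 / ρ) * pl l (φ t) + f * vt l (φ t) * |vt l (φ t)| / (2 * D))) t ∧
        HasDerivAt (fun τ => pt l (φ τ))
          (-(ρ * c ^ 2 * vl l (φ t))) t :=
  stmt_18_general r L ρ D f c θ hθpos ψ hψ φ hφψ pt vt ps vs pl vl hvs hps hpde₁ hpde₂
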